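/- arXiv:1710.00374 — 3 statements merged into one kernel-verified Lean document; each statement's English description precedes it below -/
import Mathlib

section
/- Let r ≥ 3 and ℓ ≥ 1 be given. Then forb(m, r, 𝒯_ℓ(r) \ 𝒯_ℓ(2)) is Θ(2^m): for every m ≥ 1 one has 2^m ≤ forb(m, r, 𝒯_ℓ(r) \ 𝒯_ℓ(2)), and there is a constant c (depending only on r and ℓ) such that forb(m, r, 𝒯_ℓ(r) \ 𝒯_ℓ(2)) ≤ c · 2^m for every m ≥ 1. -/
/-- A matrix with natural number entries, of size `k × p`. -/
abbrev MatN (k p : ℕ) := Matrix (Fin k) (Fin p) ℕ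

/-- A matrix bundled with its dimensions. -/
structure CMat where
  rows : ℕ
  cols : ℕ
  mat : MatN rows cols

/-- A matrix is simple if no two of its columns are equal. -/
def SimpleM {m n : ℕ} (A : MatN m n) : Prop :=
  ∀ j₁ j₂ : Fin n, (∀ i, A i j₁ = A i j₂) → j₁ = j₂

/-- An `r`-matrix: all entries lie in `{0, 1, …, r-1}`. -/
def RMat (r : ℕ) {m n : ℕ} (A : MatN m n) : Prop := ∀ i j, A i j < r

/-- `F` is a configuration of `A` (written `F ≺ A`): some submatrix of `A` is a row
and column permutation of `F`; equivalently there are injections of the rows and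
columns of `F` into those of `A` realizing the entries of `F`. -/
def IsConfig {k p m n : ℕ} (F : MatN k p) (A : MatN m n) : Prop :=
  ∃ f : Fin k → Fin m, ∃ g : Fin p → Fin n,
    Function.Injective f ∧ Function.Injective g ∧ ∀ i j, A (f i) (g j) = F i j

/-- `A` avoids every matrix of the family `𝓕` as a configuration. -/
def AvoidsFam {m n : ℕ} (A : MatN m n) (𝓕 : Set CMat) : Prop :=
  ∀ F ∈ 𝓕, ¬ IsConfig F.mat A

/-- `forb m r 𝓕`: the maximum number of columns of an `m`-rowed simple `r`-matrix
having no member of `𝓕` as a configuration. -/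
noncomputable def forb (m r : ℕ) (𝓕 : Set CMat) : ℕ :=
  sSup { n : ℕ | ∃ A : MatN m n, RMat r A ∧ SimpleM A ∧ AvoidsFam A 𝓕 }

/-- `forbmax m r 𝓕`: the maximum of `forb m' r 𝓕` over `m' ≤ m`. -/
noncomputable def forbmax (m r : ℕ) (𝓕 : Set CMat) : ℕ :=
  sSup { x : ℕ | ∃ m' ≤ m, x = forb m' r 𝓕 }

/-- The number of 1's in column `j` of `A` (the column sum). -/
def colSum {m n : ℕ} (A : MatN m n) (j : Fin n) : ℕ :=
  (Finset.univ.filter (fun i => A i j = 1)).card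

/-- `forbK k m r 𝓕`: as `forb`, but restricted to matrices all of whose columns
have exactly `k` entries equal to 1. -/
noncomputable def forbK (k m r : ℕ) (𝓕 : Set CMat) : ℕ :=
  sSup { n : ℕ | ∃ A : MatN m n, RMat r A ∧ SimpleM A ∧ (∀ j, colSum A j = k) ∧
    AvoidsFam A 𝓕 }

/-- `forbmaxK k m r 𝓕`: the maximum of `forbK k m' r 𝓕` over `m' ≤ m`. -/
noncomputable def forbmaxK (k m r : ℕ) (𝓕 : Set CMat) : ℕ :=
  sSup { x : ℕ | ∃ m' ≤ m, x = forbK k m' r 𝓕 }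

/-- `Imat ℓ a b`: the `ℓ × ℓ` matrix with `a` on the diagonal and `b` off the diagonal. -/
def Imat (ℓ a b : ℕ) : MatN ℓ ℓ := fun i j => if i = j then a else b

/-- `Tmat ℓ a b`: the `ℓ × ℓ` matrix with `a` below the diagonal and `b` on or above it. -/
def Tmat (ℓ a b : ℕ) : MatN ℓ ℓ := fun i j => if (j : ℕ) < (i : ℕ) then a else b

/-- `Tmat3 ℓ a b c`: the `ℓ × ℓ` matrix with `a` below, `b` on, and `c` above the diagonal. -/
def Tmat3 (ℓ a b c : ℕ) : MatN ℓ ℓ :=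
  fun i j => if (j : ℕ) < (i : ℕ) then a else if i = j then b else c

/-- The family `𝒯_ℓ(r)` of all `I_ℓ(a,b)` and `T_ℓ(a,b)` with `a,b ∈ {0,…,r-1}`, `a ≠ b`. -/
def TFam (ℓ r : ℕ) : Set CMat :=
  { M | ∃ a b : ℕ, a < r ∧ b < r ∧ a ≠ b ∧
      (M = ⟨ℓ, ℓ, Imat ℓ a b⟩ ∨ M = ⟨ℓ, ℓ, Tmat ℓ a b⟩) }

/-- `t·F`: the concatenation of `t` copies of `F` side by side. -/
def tcopies {k p : ℕ} (t : ℕ) (F : MatN k p) : MatN k (t * p) :=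
  fun i j => F i ⟨(j : ℕ) % p, Nat.mod_lt _ (by
    rcases Nat.eq_zero_or_pos p with h | h
    · exact absurd j.isLt (by simp [h])
    · exact h)⟩

/-- `0×1×F`: `F` with an extra row of 0's and an extra row of 1's appended. -/
def zeroOneTop {k p : ℕ} (F : MatN k p) : MatN (k + 2) p :=
  fun i j => if h : (i : ℕ) < k then F ⟨i, h⟩ j else if (i : ℕ) = k then 0 else 1

/-- `F_{a,b,c,d}`: the `(a+b+c+d) × 2` matrix with `a` rows `[1 1]`, `b` rows `[1 0]`,
`c` rows `[0 1]` and `d` rows `[0 0]`. -/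
def Fabcd (a b c d : ℕ) : MatN (a + b + c + d) 2 :=
  fun i j =>
    if (i : ℕ) < a then 1
    else if (i : ℕ) < a + b then (if (j : ℕ) = 0 then 1 else 0)
    else if (i : ℕ) < a + b + c then (if (j : ℕ) = 0 then 0 else 1)
    else 0

/-!
Lower bound: the `2 ^ m` columns over `{0, 1}` form a simple matrix, and a configuration inside
a `0/1`-matrix uses only the symbols `0` and `1`.

Upper bound: group the columns by their zero pattern. Within a group the rows of the common
support separate the columns, and all their entries are nonzero. In a large group, a staircase
(repeatedly restrict to the most frequent value of a non-constant row), an end-homogeneous Ramsey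
step and a pigeonhole on colours give a `2ℓ × 2ℓ` configuration with a nonzero `y` on the
diagonal, `z ≠ y` above it and `x` below it. If `x = z`, its even rows and columns form
`I_ℓ(y, z)`; otherwise even rows against odd columns form `T_ℓ(x, z)`. Both use a symbol `≥ 2`.
For `ℓ = 1` the family forbids every entry `≥ 2` outright.
-/

open Finset Function

section Ramsey

variable {α β : Type*}

theorem exists_staircase (A : α → β → ℕ) {r : ℕ} (hr : 0 < r) (s : Finset α) (c : Finset β)
    (D : ℕ) (hA : ∀ i ∈ s, ∀ j ∈ c, A i j < r)
    (hsep : ∀ j ∈ c, ∀ j' ∈ c, (∀ i ∈ s, A i j = A i j') → j = j') (hc : r ^ D < #c) :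
    ∃ (R : Fin D → α) (C : Fin D → β) (v : Fin D → ℕ), Injective R ∧
      (∀ p, R p ∈ s ∧ C p ∈ c ∧ v p < r ∧ A (R p) (C p) ≠ v p) ∧
      ∀ p q, p < q → A (R p) (C q) = v p := by
  classical
  induction s using Finset.induction_on generalizing c D with
  | empty =>
    have : #c ≤ 1 := card_le_one.2 fun j hj j' hj' => hsep j hj j' hj' (by simp)
    have := Nat.one_le_pow D r hr
    omega
  | insert a s ha ih =>
    by_cases hconst : ∀ j ∈ c, ∀ j' ∈ c, A a j = A a j'
    · obtain ⟨R, C, v, hR, hmem, habove⟩ := ih c D (fun i hi => hA i (mem_insert_of_mem hi))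
        (fun j hj j' hj' h =>
          hsep j hj j' hj' ((forall_mem_insert _ _ _).2 ⟨hconst j hj j' hj', h⟩))
        hc
      exact ⟨R, C, v, hR, fun p => ⟨mem_insert_of_mem (hmem p).1, (hmem p).2⟩, habove⟩
    push Not at hconst
    obtain ⟨j₁, hj₁, j₂, hj₂, hne⟩ := hconst
    cases D with
    | zero => exact ⟨Fin.elim0, Fin.elim0, Fin.elim0, fun p => p.elim0, fun p => p.elim0,
        fun p => p.elim0⟩
    | succ D =>
    -- the most popular value `x` of row `a` is taken by more than `r ^ D` columns
    obtain ⟨x, hxr, hx⟩ := exists_lt_card_fiber_of_mul_lt_card_of_maps_to (s := c) (t := range r)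
      (f := A a) (n := r ^ D) (fun j hj => mem_range.2 (hA a (mem_insert_self a s) j hj))
      (by rwa [card_range, ← pow_succ'])
    obtain ⟨j₀, hj₀, hj₀x⟩ : ∃ j₀ ∈ c, A a j₀ ≠ x := by
      by_cases h : A a j₁ = x
      · exact ⟨j₂, hj₂, fun h' => hne (h.trans h'.symm)⟩
      · exact ⟨j₁, hj₁, h⟩
    obtain ⟨R, C, v, hR, hmem, habove⟩ := ih {j ∈ c | A a j = x} D
      (fun i hi j hj => hA i (mem_insert_of_mem hi) j (mem_filter.1 hj).1)
      (fun j hj j' hj' h => hsep j (mem_filter.1 hj).1 j' (mem_filter.1 hj').1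
        ((forall_mem_insert _ _ _).2 ⟨(mem_filter.1 hj).2.trans (mem_filter.1 hj').2.symm, h⟩))
      hx
    refine ⟨Fin.cons a R, Fin.cons j₀ C, Fin.cons x v, ?_, ?_, ?_⟩
    · exact Fin.cons_injective_iff.2 ⟨fun ⟨p, hpa⟩ => ha (hpa ▸ (hmem p).1), hR⟩
    · refine Fin.cases ⟨mem_insert_self a s, hj₀, mem_range.1 hxr, hj₀x⟩ fun p => ?_
      simp only [Fin.cons_succ]
      exact ⟨mem_insert_of_mem (hmem p).1, (mem_filter.1 (hmem p).2.1).1, (hmem p).2.2⟩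
    · intro p q hpq
      induction q using Fin.cases with
      | zero => exact absurd hpq (Fin.not_lt_zero p)
      | succ q =>
        induction p using Fin.cases with
        | zero => exact (mem_filter.1 (hmem q).2.1).2
        | succ p => exact habove p q (Fin.succ_lt_succ_iff.1 hpq)

theorem exists_endHomogeneous [LinearOrder α] (b : α → α → ℕ) {r : ℕ} (hr : 2 ≤ r)
    (hb : ∀ x y, b x y < r) (T : ℕ) (S : Finset α) (hS : r ^ T ≤ #S) :
    ∃ S' ⊆ S, T ≤ #S' ∧ ∃ γ : α → ℕ, (∀ x, γ x < r) ∧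
      ∀ x ∈ S', ∀ y ∈ S', x < y → b y x = γ x := by
  classical
  induction T generalizing S with
  | zero => exact ⟨∅, empty_subset S, le_rfl, fun _ => 0, fun _ => (by omega : 0 < r), by simp⟩
  | succ T ih =>
    rw [pow_succ'] at hS
    have hrS : r ≤ r * r ^ T := Nat.le_mul_of_pos_right r (Nat.pow_pos (by omega))
    have hne : S.Nonempty := card_pos.1 (by omega)
    set x₀ := S.min' hne
    -- the colours `b y x₀` of the later points split them into `r` classes, one of them large
    obtain ⟨c₀, hc₀, hfib⟩ := exists_lt_card_fiber_of_mul_lt_card_of_maps_to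
      (s := S.erase x₀) (t := range r) (f := fun y => b y x₀) (n := r ^ T - 1)
      (fun y _ => mem_range.2 (hb y x₀))
      (by rw [card_range, card_erase_of_mem (S.min'_mem hne), Nat.mul_sub_one]; omega)
    obtain ⟨S', hS'sub, hS'card, γ, hγr, hγ⟩ :=
      ih {y ∈ S.erase x₀ | b y x₀ = c₀} (by omega)
    have hx₀S' : x₀ ∉ S' := fun h => by simpa using (mem_filter.1 (hS'sub h)).1
    refine ⟨insert x₀ S', ?_, by rw [card_insert_of_notMem hx₀S']; omega,
      update γ x₀ c₀, fun x => ?_, ?_⟩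
    · exact insert_subset (S.min'_mem hne) fun y hy => mem_of_mem_erase (mem_filter.1 (hS'sub hy)).1
    · rcases eq_or_ne x x₀ with rfl | hx
      · simpa using mem_range.1 hc₀
      · simpa [hx] using hγr x
    · simp only [forall_mem_insert]
      refine ⟨⟨fun h => absurd h (lt_irrefl _), fun y hy _ => ?_⟩, fun x hx => ⟨fun h => ?_, ?_⟩⟩
      · simpa using (mem_filter.1 (hS'sub hy)).2
      · exact absurd (S.min'_le x (mem_of_mem_erase (mem_filter.1 (hS'sub hx)).1)) (not_le.2 h)
      · intro y hy hxy
        rw [update_of_ne (ne_of_mem_of_not_mem hx hx₀S')]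
        exact hγ x hx y hy hxy

theorem exists_tmat3_pattern (A : α → β → ℕ) {r : ℕ} (hr : 2 ≤ r) {M : ℕ} (hM : 0 < M)
    (s : Finset α) (c : Finset β) (hA : ∀ i ∈ s, ∀ j ∈ c, A i j < r)
    (hsep : ∀ j ∈ c, ∀ j' ∈ c, (∀ i ∈ s, A i j = A i j') → j = j')
    (hc : r ^ r ^ (r ^ 3 * M) < #c) :
    ∃ (R : Fin M → α) (C : Fin M → β) (x y z : ℕ), y ≠ z ∧ Injective R ∧ Injective C ∧
      (∀ i, R i ∈ s) ∧ (∀ j, C j ∈ c) ∧ ∀ i j, A (R i) (C j) = Tmat3 M x y z i j := by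
  classical
  obtain ⟨R, C, v, hR, hmem, habove⟩ := exists_staircase A (by omega) s c _ hA hsep hc
  have hC : Injective C := by
    intro p q hpq
    by_contra hne
    rcases lt_or_gt_of_ne hne with h | h
    · exact (hmem p).2.2.2 (by rw [hpq]; exact habove p q h)
    · exact (hmem q).2.2.2 (by rw [← hpq]; exact habove q p h)
  have hb : ∀ p q, A (R p) (C q) < r := fun p q => hA _ (hmem p).1 _ (hmem q).2.1
  obtain ⟨S, -, hScard, γ, hγr, hγ⟩ :=
    exists_endHomogeneous (fun p q => A (R p) (C q)) hr hb (r ^ 3 * M) univ (by simp)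
  obtain ⟨⟨y, z, x⟩, -, hfib⟩ := exists_le_card_fiber_of_mul_le_card_of_maps_to
    (s := S) (t := range r ×ˢ range r ×ˢ range r) (n := M)
    (f := fun p => (A (R p) (C p), v p, γ p))
    (fun p _ => by simp [hb, (hmem p).2.2.1, hγr])
    ⟨(0, 0, 0), by simp [show 0 < r by omega]⟩ (by simpa [pow_three, mul_assoc] using hScard)
  obtain ⟨P, hPsub, hPcard⟩ := exists_subset_card_eq hfib
  set e := P.orderEmbOfFin hPcard
  have he : ∀ i, e i ∈ S ∧ A (R (e i)) (C (e i)) = y ∧ v (e i) = z ∧ γ (e i) = x := by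
    intro i
    have := mem_filter.1 (hPsub (P.orderEmbOfFin_mem hPcard i))
    simp only [Prod.mk.injEq] at this
    exact ⟨this.1, this.2.1, this.2.2.1, this.2.2.2⟩
  refine ⟨R ∘ e, C ∘ e, x, y, z, ?_, hR.comp e.injective, hC.comp e.injective,
    fun i => (hmem _).1, fun j => (hmem _).2.1, fun i j => ?_⟩
  · obtain ⟨-, h₁, h₂, -⟩ := he ⟨0, hM⟩
    exact h₁ ▸ h₂ ▸ (hmem _).2.2.2
  simp only [Tmat3, comp_apply]
  split_ifs with hji hij
  · rw [← (he j).2.2.2]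
    exact hγ _ (he j).1 _ (he i).1 (e.strictMono hji)
  · subst hij
    exact (he i).2.1
  · rw [← (he i).2.2.1]
    exact habove _ _ (e.strictMono (by omega))

end Ramsey

theorem IsConfig.trans {k p k' p' m n : ℕ} {F : MatN k p} {G : MatN k' p'} {A : MatN m n}
    (hFG : IsConfig F G) (hGA : IsConfig G A) : IsConfig F A := by
  obtain ⟨f, g, hf, hg, hfg⟩ := hFG
  obtain ⟨f', g', hf', hg', hfg'⟩ := hGA
  exact ⟨f' ∘ f, g' ∘ g, hf'.comp hf, hg'.comp hg, fun i j => (hfg' _ _).trans (hfg i j)⟩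

theorem card_le_pow_of_simpleM {r m n : ℕ} {A : MatN m n} (hAr : RMat r A) (hA : SimpleM A) :
    n ≤ r ^ m := by
  have hinj : Injective fun j : Fin n => fun i : Fin m => (⟨A i j, hAr i j⟩ : Fin r) :=
    fun j₁ j₂ h => hA j₁ j₂ fun i => congrArg Fin.val (congrFun h i)
  simpa using Fintype.card_le_of_injective _ hinj

theorem lt_two_of_mem_TFam_two {ℓ : ℕ} {F : CMat} (hF : F ∈ TFam ℓ 2) (i : Fin F.rows)
    (j : Fin F.cols) : F.mat i j < 2 := by
  obtain ⟨a, b, ha, hb, -, rfl | rfl⟩ := hF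
  · change Imat ℓ a b i j < 2
    unfold Imat
    split_ifs <;> assumption
  · change Tmat ℓ a b i j < 2
    unfold Tmat
    split_ifs <;> assumption

theorem mem_TFam_two_of_lt_two {ℓ r : ℕ} {F : CMat} (hF : F ∈ TFam ℓ r)
    (h : ∀ i j, F.mat i j < 2) : F ∈ TFam ℓ 2 := by
  obtain ⟨a, b, -, -, hab, rfl | rfl⟩ := hF
  · have h : ∀ i j, Imat ℓ a b i j < 2 := h
    refine ⟨min a 1, 1 - min a 1, by omega, by omega, by omega, Or.inl ?_⟩
    congr 1
    funext i j
    have hi := h i i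
    simp only [Imat, if_true] at hi
    unfold Imat
    split_ifs with hij
    · omega
    · have := h i j
      simp only [Imat, hij, if_false] at this
      omega
  · have h : ∀ i j, Tmat ℓ a b i j < 2 := h
    refine ⟨1 - min b 1, min b 1, by omega, by omega, by omega, Or.inr ?_⟩
    congr 1
    funext i j
    have hi := h i i
    simp only [Tmat, lt_irrefl, if_false] at hi
    have hij := h i j
    unfold Tmat at hij ⊢
    split_ifs at hij ⊢ <;> omega

theorem avoidsFam_of_lt_two {ℓ r m n : ℕ} {A : MatN m n} (hA : ∀ i j, A i j < 2) :
    AvoidsFam A (TFam ℓ r \ TFam ℓ 2) := by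
  rintro F ⟨hF, hF2⟩ ⟨f, g, -, -, hfg⟩
  exact hF2 (mem_TFam_two_of_lt_two hF fun i j => hfg i j ▸ hA _ _)

theorem lt_two_of_avoidsFam_one {r m n : ℕ} {A : MatN m n} (hAr : RMat r A)
    (hA : AvoidsFam A (TFam 1 r \ TFam 1 2)) (i : Fin m) (j : Fin n) : A i j < 2 := by
  by_contra! h
  refine hA ⟨1, 1, Imat 1 (A i j) 0⟩
    ⟨⟨A i j, 0, hAr i j, (Nat.zero_le _).trans_lt (hAr i j), by omega, Or.inl rfl⟩, fun h2 => ?_⟩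
    ⟨fun _ => i, fun _ => j, injective_of_subsingleton _, injective_of_subsingleton _,
      fun a b => by simp [Imat, Subsingleton.elim a b]⟩
  have := lt_two_of_mem_TFam_two h2 0 0
  simp only [Imat, if_true] at this
  omega

theorem imat_mem_TFam_sdiff_TFam_two {ℓ r a b : ℕ} (hℓ : 2 ≤ ℓ) (ha : 0 < a) (hb : 0 < b)
    (har : a < r) (hbr : b < r) (hab : a ≠ b) :
    (⟨ℓ, ℓ, Imat ℓ a b⟩ : CMat) ∈ TFam ℓ r \ TFam ℓ 2 := by
  refine ⟨⟨a, b, har, hbr, hab, Or.inl rfl⟩, fun h => ?_⟩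
  have h₀₀ := lt_two_of_mem_TFam_two h (⟨0, by omega⟩ : Fin ℓ) (⟨0, by omega⟩ : Fin ℓ)
  have h₀₁ := lt_two_of_mem_TFam_two h (⟨0, by omega⟩ : Fin ℓ) (⟨1, by omega⟩ : Fin ℓ)
  simp only [Imat, Fin.mk.injEq, zero_ne_one, ↓reduceIte] at h₀₀ h₀₁
  omega

theorem tmat_mem_TFam_sdiff_TFam_two {ℓ r a b : ℕ} (hℓ : 2 ≤ ℓ) (ha : 0 < a) (hb : 0 < b)
    (har : a < r) (hbr : b < r) (hab : a ≠ b) :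
    (⟨ℓ, ℓ, Tmat ℓ a b⟩ : CMat) ∈ TFam ℓ r \ TFam ℓ 2 := by
  refine ⟨⟨a, b, har, hbr, hab, Or.inr rfl⟩, fun h => ?_⟩
  have h₁₀ := lt_two_of_mem_TFam_two h (⟨1, by omega⟩ : Fin ℓ) (⟨0, by omega⟩ : Fin ℓ)
  have h₀₀ := lt_two_of_mem_TFam_two h (⟨0, by omega⟩ : Fin ℓ) (⟨0, by omega⟩ : Fin ℓ)
  simp only [Tmat, Nat.lt_irrefl, Nat.zero_lt_one, ↓reduceIte] at h₁₀ h₀₀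
  omega

theorem imat_isConfig_tmat3 (ℓ a b : ℕ) : IsConfig (Imat ℓ a b) (Tmat3 (2 * ℓ) b a b) := by
  refine ⟨fun i => ⟨2 * i, by omega⟩, fun j => ⟨2 * j, by omega⟩, fun i i' h => ?_,
    fun j j' h => ?_, fun i j => ?_⟩
  · simp only [Fin.mk.injEq] at h; omega
  · simp only [Fin.mk.injEq] at h; omega
  · simp only [Imat, Tmat3, Fin.ext_iff]
    split_ifs <;> omega

-- even rows against odd columns never meet the diagonal
theorem tmat_isConfig_tmat3 (ℓ a b c : ℕ) : IsConfig (Tmat ℓ a c) (Tmat3 (2 * ℓ) a b c) := by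
  refine ⟨fun i => ⟨2 * i, by omega⟩, fun j => ⟨2 * j + 1, by omega⟩, fun i i' h => ?_,
    fun j j' h => ?_, fun i j => ?_⟩
  · simp only [Fin.mk.injEq] at h; omega
  · simp only [Fin.mk.injEq] at h; omega
  · simp only [Tmat, Tmat3, Fin.mk.injEq]
    split_ifs <;> omega

theorem card_le_of_avoidsFam_of_ne_zero {r ℓ m n : ℕ} (hr : 2 ≤ r) (hℓ : 2 ≤ ℓ) {A : MatN m n}
    (hAr : RMat r A) (hA : AvoidsFam A (TFam ℓ r \ TFam ℓ 2)) (s : Finset (Fin m))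
    (c : Finset (Fin n)) (hpos : ∀ i ∈ s, ∀ j ∈ c, A i j ≠ 0)
    (hsep : ∀ j ∈ c, ∀ j' ∈ c, (∀ i ∈ s, A i j = A i j') → j = j') :
    #c ≤ r ^ r ^ (r ^ 3 * (2 * ℓ)) := by
  by_contra! hc
  obtain ⟨R, C, x, y, z, hyz, hR, hC, hRs, hCc, hRC⟩ :=
    exists_tmat3_pattern A hr (by omega) s c (fun i _ j _ => hAr i j) hsep hc
  have hcfg : IsConfig (Tmat3 (2 * ℓ) x y z) A := ⟨R, C, hR, hC, hRC⟩
  have hentry : ∀ i j, 0 < Tmat3 (2 * ℓ) x y z i j ∧ Tmat3 (2 * ℓ) x y z i j < r :=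
    fun i j => hRC i j ▸ ⟨Nat.pos_of_ne_zero (hpos _ (hRs i) _ (hCc j)), hAr _ _⟩
  have hx := hentry ⟨1, by omega⟩ ⟨0, by omega⟩
  have hy := hentry ⟨0, by omega⟩ ⟨0, by omega⟩
  have hz := hentry ⟨0, by omega⟩ ⟨1, by omega⟩
  simp only [Tmat3, Fin.mk.injEq, Nat.lt_irrefl, Nat.zero_lt_one, Nat.not_lt_zero, zero_ne_one,
    ↓reduceIte] at hx hy hz
  by_cases hxz : x = z
  · subst hxz
    exact hA _ (imat_mem_TFam_sdiff_TFam_two hℓ hy.1 hz.1 hy.2 hz.2 hyz)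
      ((imat_isConfig_tmat3 ℓ y x).trans hcfg)
  · exact hA _ (tmat_mem_TFam_sdiff_TFam_two hℓ hx.1 hz.1 hx.2 hz.2 hxz)
      ((tmat_isConfig_tmat3 ℓ x y z).trans hcfg)

theorem card_le_of_avoidsFam {r ℓ m n : ℕ} (hr : 2 ≤ r) (hℓ : 1 ≤ ℓ) {A : MatN m n}
    (hAr : RMat r A) (hS : SimpleM A) (hA : AvoidsFam A (TFam ℓ r \ TFam ℓ 2)) :
    n ≤ 2 ^ m * r ^ r ^ (r ^ 3 * (2 * ℓ)) := by
  classical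
  have hK : 1 ≤ r ^ r ^ (r ^ 3 * (2 * ℓ)) := Nat.one_le_pow _ _ (by omega)
  obtain rfl | hℓ := eq_or_lt_of_le hℓ
  · exact (card_le_pow_of_simpleM (lt_two_of_avoidsFam_one hAr hA) hS).trans
      (Nat.le_mul_of_pos_right _ hK)
  set supp : Fin n → Finset (Fin m) := fun j => {i | A i j ≠ 0}
  have hsupp : ∀ {t j}, j ∈ ({j | supp j = t} : Finset _) → ∀ i, i ∈ t ↔ A i j ≠ 0 := by
    intro t j hj i
    rw [← (mem_filter.1 hj).2]
    simp [supp]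
  have hfib : ∀ t ∈ univ.image supp, #{j | supp j = t} ≤ r ^ r ^ (r ^ 3 * (2 * ℓ)) := by
    intro t _
    refine card_le_of_avoidsFam_of_ne_zero hr hℓ hAr hA t _ (fun i hi j hj => (hsupp hj i).1 hi)
      fun j hj j' hj' h => hS j j' fun i => ?_
    by_cases hi : i ∈ t
    · exact h i hi
    · rw [not_not.1 (mt (hsupp hj i).2 hi), not_not.1 (mt (hsupp hj' i).2 hi)]
  calc n = #(univ : Finset (Fin n)) := (card_fin n).symm
    _ ≤ r ^ r ^ (r ^ 3 * (2 * ℓ)) * #(univ.image supp) := card_le_mul_card_image _ _ hfib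
    _ ≤ r ^ r ^ (r ^ 3 * (2 * ℓ)) * 2 ^ m := by
      gcongr
      simpa using card_le_univ (univ.image supp)
    _ = 2 ^ m * r ^ r ^ (r ^ 3 * (2 * ℓ)) := mul_comm _ _

theorem two_pow_le_forb {r : ℕ} (hr : 2 ≤ r) (ℓ m : ℕ) :
    2 ^ m ≤ forb m r (TFam ℓ r \ TFam ℓ 2) := by
  let A : MatN m (2 ^ m) := fun i j => finFunctionFinEquiv.symm j i
  have hA : ∀ i j, A i j < 2 := fun i j => (finFunctionFinEquiv.symm j i).isLt
  refine le_csSup ⟨r ^ m, fun n ⟨B, hBr, hB, _⟩ => card_le_pow_of_simpleM hBr hB⟩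
    ⟨A, fun i j => (hA i j).trans_le hr, fun j₁ j₂ h => ?_, avoidsFam_of_lt_two hA⟩
  exact finFunctionFinEquiv.symm.injective (funext fun i => Fin.ext (h i))

theorem forb_le {r ℓ : ℕ} (hr : 2 ≤ r) (hℓ : 1 ≤ ℓ) (m : ℕ) :
    forb m r (TFam ℓ r \ TFam ℓ 2) ≤ r ^ r ^ (r ^ 3 * (2 * ℓ)) * 2 ^ m :=
  csSup_le' fun _ ⟨_, hAr, hS, hA⟩ =>
    (card_le_of_avoidsFam hr hℓ hAr hS hA).trans_eq (mul_comm _ _)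

/-- For `r ≥ 3`, `ℓ ≥ 1`, `forb(m, r, 𝒯_ℓ(r) \ 𝒯_ℓ(2))` is `Θ(2^m)`. -/
theorem stmt0 (r ℓ : ℕ) (hr : 3 ≤ r) (hℓ : 1 ≤ ℓ) :
    (∀ m : ℕ, 1 ≤ m → 2 ^ m ≤ forb m r (TFam ℓ r \ TFam ℓ 2)) ∧
    ∃ c : ℕ, ∀ m : ℕ, 1 ≤ m → forb m r (TFam ℓ r \ TFam ℓ 2) ≤ c * 2 ^ m :=
  ⟨fun m _ => two_pow_le_forb (by omega) ℓ m, _, fun m _ => forb_le (by omega) hℓ m⟩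
end

section
/- Let ℓ ≥ 4. Then forb(m, 3, (𝒯_ℓ(3) \ 𝒯_ℓ(2)) ∪ {[0 1]}) is Θ(1): there is a constant c (depending only on ℓ) such that forb(m, 3, (𝒯_ℓ(3) \ 𝒯_ℓ(2)) ∪ {[0 1]}) ≤ c for every m ≥ 1, where [0 1] denotes the 1×2 matrix with entries 0 and 1. -/
/-!
Since `[0 1]` is forbidden, no row of `A` contains both a `0` and a `1`: every row has a base
value `v ∈ {0, 1}` and all its other entries are `2`. A column is therefore determined by its set of
`2`'s, so a matrix with many columns yields many distinct subsets of the rows. By Ramsey's theorem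
for triples (the Balogh–Bollobás argument), many distinct sets contain `ℓ` sets and `ℓ` points,
all points of the same base value, whose incidence pattern is constant below the diagonal,
complementary to that constant on the diagonal, and constant above it. The corresponding
submatrix of `A` is `I_ℓ(2,v)`, `I_ℓ(v,2)`, `T_ℓ(2,v)` or `T_ℓ(v,2)`, which the family forbids.
-/

open Finset
open scoped Matrix

section Ramsey

variable {C : Type*} [Fintype C] [Nonempty C]

theorem exists_endHomogeneous_pairs (t : ℕ) :
    ∃ M : ℕ, ∀ {β : Type*} [LinearOrder β] (χ : β → β → C) (V : Finset β), M ≤ #V →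
      ∃ T ⊆ V, #T = t ∧ ∃ d : β → C, ∀ a ∈ T, ∀ b ∈ T, a < b → χ a b = d a := by
  classical
  induction t with
  | zero => exact ⟨0, fun χ V _ => ⟨∅, empty_subset V, rfl, fun a => χ a a, by simp⟩⟩
  | succ t ih =>
    obtain ⟨M, hM⟩ := ih
    refine ⟨Fintype.card C * M + 1, fun χ V hV => ?_⟩
    have hV₀ : V.Nonempty := card_pos.mp (by omega)
    set a₀ := V.min' hV₀
    obtain ⟨c₀, -, hc₀⟩ := exists_le_card_fiber_of_mul_le_card_of_maps_to
      (f := χ a₀) (s := V.erase a₀) (t := univ) (n := M) (fun _ _ => mem_univ _) univ_nonempty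
      (by rw [card_univ, card_erase_of_mem (min'_mem V hV₀)]; omega)
    obtain ⟨T, hTsub, hT, d, hd⟩ := hM χ _ hc₀
    have hTV : ∀ a ∈ T, a ∈ V ∧ a ≠ a₀ ∧ χ a₀ a = c₀ := fun a ha => by
      have := hTsub ha
      simp only [mem_filter, mem_erase] at this
      exact ⟨this.1.2, this.1.1, this.2⟩
    have ha₀T : a₀ ∉ T := fun h => (hTV a₀ h).2.1 rfl
    refine ⟨insert a₀ T, insert_subset (min'_mem V hV₀) fun a ha => (hTV a ha).1,
      by rw [card_insert_of_notMem ha₀T, hT], Function.update d a₀ c₀, ?_⟩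
    intro a ha b hb hab
    rcases mem_insert.mp ha with rfl | ha
    · rcases mem_insert.mp hb with rfl | hb
      · exact absurd hab (lt_irrefl _)
      · simpa using (hTV b hb).2.2
    · have ha₀a : a₀ < a := lt_of_le_of_ne (min'_le V a (hTV a ha).1) (hTV a ha).2.1.symm
      rcases mem_insert.mp hb with rfl | hb
      · exact absurd (ha₀a.trans hab) (lt_irrefl _)
      · rw [Function.update_of_ne (hTV a ha).2.1]
        exact hd a ha b hb hab

theorem exists_monochromatic_pairs (k : ℕ) :
    ∃ M : ℕ, ∀ {β : Type*} [LinearOrder β] (χ : β → β → C) (V : Finset β), M ≤ #V →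
      ∃ T ⊆ V, #T = k ∧ ∃ c : C, ∀ a ∈ T, ∀ b ∈ T, a < b → χ a b = c := by
  classical
  obtain ⟨M, hM⟩ := exists_endHomogeneous_pairs (C := C) (Fintype.card C * k)
  refine ⟨M, fun χ V hV => ?_⟩
  obtain ⟨T, hTV, hT, d, hd⟩ := hM χ V hV
  obtain ⟨c, -, hc⟩ := exists_le_card_fiber_of_mul_le_card_of_maps_to
    (f := d) (s := T) (t := univ) (n := k) (fun _ _ => mem_univ _) univ_nonempty (by simp [hT])
  obtain ⟨T', hT'T, hT'⟩ := exists_subset_card_eq hc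
  refine ⟨T', fun a ha => hTV (filter_subset _ _ (hT'T ha)), hT', c, fun a ha b hb hab => ?_⟩
  rw [hd a (filter_subset _ _ (hT'T ha)) b (filter_subset _ _ (hT'T hb)) hab]
  exact (mem_filter.mp (hT'T ha)).2

theorem exists_endHomogeneous_triples (t : ℕ) :
    ∃ M : ℕ, ∀ {β : Type*} [LinearOrder β] (χ : β → β → β → C) (V : Finset β), M ≤ #V →
      ∃ T ⊆ V, #T = t ∧ ∃ e : β → β → C,
        ∀ a ∈ T, ∀ b ∈ T, ∀ c ∈ T, a < b → b < c → χ a b c = e a b := by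
  classical
  induction t with
  | zero => exact ⟨0, fun χ V _ => ⟨∅, empty_subset V, rfl, fun a b => χ a b b, by simp⟩⟩
  | succ t ih =>
    obtain ⟨M, hM⟩ := ih
    obtain ⟨M₂, hM₂⟩ := exists_endHomogeneous_pairs (C := C) M
    refine ⟨M₂ + 1, fun χ V hV => ?_⟩
    have hV₀ : V.Nonempty := card_pos.mp (by omega)
    set a₀ := V.min' hV₀
    obtain ⟨T₂, hT₂V, hT₂, d, hd⟩ := hM₂ (χ a₀) (V.erase a₀)
      (by rw [card_erase_of_mem (min'_mem V hV₀)]; omega)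
    obtain ⟨T, hTT₂, hT, e, he⟩ := hM χ T₂ hT₂.ge
    have hTV : ∀ a ∈ T, a ∈ V ∧ a ≠ a₀ := fun a ha => by
      have := hT₂V (hTT₂ ha)
      exact ⟨(mem_erase.mp this).2, (mem_erase.mp this).1⟩
    have ha₀T : a₀ ∉ T := fun h => (hTV a₀ h).2 rfl
    have ha₀lt : ∀ a ∈ T, a₀ < a := fun a ha =>
      lt_of_le_of_ne (min'_le V a (hTV a ha).1) (hTV a ha).2.symm
    refine ⟨insert a₀ T, insert_subset (min'_mem V hV₀) fun a ha => (hTV a ha).1,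
      by rw [card_insert_of_notMem ha₀T, hT], fun a b => if a = a₀ then d b else e a b, ?_⟩
    intro a ha b hb c hc hab hbc
    rcases mem_insert.mp ha with rfl | ha
    · have hb' : b ∈ T := (mem_insert.mp hb).resolve_left hab.ne'
      have hc' : c ∈ T := (mem_insert.mp hc).resolve_left (hab.trans hbc).ne'
      simpa using hd b (hTT₂ hb') c (hTT₂ hc') hbc
    · have hb' : b ∈ T := (mem_insert.mp hb).resolve_left ((ha₀lt a ha).trans hab).ne'
      have hc' : c ∈ T :=
        (mem_insert.mp hc).resolve_left (((ha₀lt a ha).trans hab).trans hbc).ne'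
      dsimp only
      rw [if_neg (hTV a ha).2]
      exact he a ha b hb' c hc' hab hbc

theorem exists_monochromatic_triples (k : ℕ) :
    ∃ M : ℕ, ∀ {β : Type*} [LinearOrder β] (χ : β → β → β → C) (V : Finset β), M ≤ #V →
      ∃ T ⊆ V, #T = k ∧ ∃ c : C,
        ∀ a ∈ T, ∀ b ∈ T, ∀ d ∈ T, a < b → b < d → χ a b d = c := by
  obtain ⟨M₂, hM₂⟩ := exists_monochromatic_pairs (C := C) k
  obtain ⟨M, hM⟩ := exists_endHomogeneous_triples (C := C) M₂
  refine ⟨M, fun χ V hV => ?_⟩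
  obtain ⟨T, hTV, hT, e, he⟩ := hM χ V hV
  obtain ⟨T', hT'T, hT', c, hc⟩ := hM₂ e T hT.ge
  exact ⟨T', hT'T.trans hTV, hT', c, fun a ha b hb d hd hab hbd =>
    (he a (hT'T ha) b (hT'T hb) d (hT'T hd) hab hbd).trans (hc a ha b hb hab)⟩

end Ramsey

theorem exists_separating_points {ι α : Type*} [Nonempty α] {S : ι → Finset α}
    (hS : Function.Injective S) :
    ∃ z : ι → ι → α, ∀ a b, a ≠ b → (z a b ∈ S a ↔ z a b ∉ S b) := by
  classical
  have hsep (a b : ι) : ∃ y : α, a ≠ b → (y ∈ S a ↔ y ∉ S b) := by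
    by_cases hab : a = b
    · exact ⟨Classical.arbitrary α, fun h => absurd hab h⟩
    · obtain ⟨y, hy⟩ : ∃ y, ¬(y ∈ S a ↔ y ∈ S b) := by
        by_contra! h
        exact hab (hS (Finset.ext h))
      exact ⟨y, fun _ => by tauto⟩
  choose z hz using hsep
  exact ⟨z, hz⟩

section Interleaved

variable {α : Type*} {k : ℕ} {c₁ c₂ c₃ : Prop}

-- The points are the separators `z (2i) (2i+1)`; the last set only serves as a third index above
-- them.
theorem exists_interleaved_of_homogeneous (S : Fin (2 * k + 1) → Finset α)
    (z : Fin (2 * k + 1) → Fin (2 * k + 1) → α) (hz : ∀ p q, p < q → (z p q ∈ S p ↔ z p q ∉ S q))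
    (hcol : ∀ p q r, p < q → q < r →
      (z p q ∈ S q ↔ c₁) ∧ (z p q ∈ S r ↔ c₂) ∧ (z q r ∈ S p ↔ c₃)) :
    ∃ x : Fin k → α, (∀ i, ∃ p q, p < q ∧ q < Fin.last (2 * k) ∧ x i = z p q) ∧
      ∀ i q, x i ∈ S q ↔ if (q : ℕ) < 2 * i then c₃ else if (q : ℕ) = 2 * i then ¬c₁
        else if (q : ℕ) = 2 * i + 1 then c₁ else c₂ := by
  let lo (i : Fin k) : Fin (2 * k + 1) := ⟨2 * i, by omega⟩
  let hi (i : Fin k) : Fin (2 * k + 1) := ⟨2 * i + 1, by omega⟩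
  have hlohi (i : Fin k) : lo i < hi i := Fin.lt_def.mpr (by simp [lo, hi])
  have hhitop (i : Fin k) : hi i < Fin.last (2 * k) := Fin.lt_def.mpr (by simp [hi]; omega)
  refine ⟨fun i => z (lo i) (hi i), fun i => ⟨lo i, hi i, hlohi i, hhitop i, rfl⟩, fun i q => ?_⟩
  rcases lt_trichotomy (q : ℕ) (2 * i) with h | h | h
  · rw [if_pos h]
    exact (hcol q (lo i) (hi i) (Fin.lt_def.mpr h) (hlohi i)).2.2
  · obtain rfl : q = lo i := Fin.ext h
    rw [if_neg (lt_irrefl _), if_pos rfl, hz _ _ (hlohi i)]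
    exact not_congr (hcol (lo i) (hi i) _ (hlohi i) (hhitop i)).1
  · rw [if_neg (by omega), if_neg (by omega)]
    by_cases h' : (q : ℕ) = 2 * i + 1
    · obtain rfl : q = hi i := Fin.ext h'
      rw [if_pos h']
      exact (hcol (lo i) (hi i) _ (hlohi i) (hhitop i)).1
    · rw [if_neg h']
      exact (hcol (lo i) (hi i) q (hlohi i) (Fin.lt_def.mpr (by simp [hi]; omega))).2.1

theorem exists_triangular_of_interleaved (S : Fin (2 * k + 1) → Finset α) (x : Fin k → α)
    (hx : ∀ i q, x i ∈ S q ↔ if (q : ℕ) < 2 * i then c₃ else if (q : ℕ) = 2 * i then ¬c₁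
      else if (q : ℕ) = 2 * i + 1 then c₁ else c₂) :
    ∃ g : Fin k → Fin (2 * k + 1),
      ∀ i j, x i ∈ S (g j) ↔ if j < i then c₃ else if i = j then ¬c₃ else c₂ := by
  classical
  -- Column `j` is `2j` or `2j + 1`, whichever puts `¬c₃` on the diagonal.
  let e : ℕ := if c₁ ↔ ¬c₃ then 1 else 0
  have he : e ≤ 1 := by unfold e; split_ifs <;> omega
  refine ⟨fun j => ⟨2 * j + e, by omega⟩, fun i j => ?_⟩
  rw [hx]
  simp only [Fin.lt_def, Fin.ext_iff]
  rcases lt_trichotomy (j : ℕ) i with h | h | h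
  · rw [if_pos (by omega), if_pos h]
  · obtain rfl : i = j := Fin.ext h.symm
    rw [if_neg (lt_irrefl _), if_pos rfl, if_neg (by omega)]
    by_cases hc : c₁ ↔ ¬c₃
    · simp only [e, if_pos hc, if_neg (by omega : 2 * (i : ℕ) + 1 ≠ 2 * i)]
      exact hc
    · simp only [e, if_neg hc, Nat.add_zero]
      tauto
  · rw [if_neg (by omega), if_neg (by omega), if_neg (by omega), if_neg (by omega),
      if_neg (by omega)]

end Interleaved

theorem exists_triangular_trace {C : Type*} [Fintype C] [Nonempty C] (k : ℕ) :
    ∃ N : ℕ, ∀ {α : Type*} {n : ℕ} (w : α → C) (S : Fin n → Finset α),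
      Function.Injective S → N ≤ n →
      ∃ (c : C) (below above : Prop) (x : Fin k → α) (g : Fin k → Fin n),
        (∀ i, w (x i) = c) ∧
        ∀ i j, x i ∈ S (g j) ↔ if j < i then below else if i = j then ¬below else above := by
  obtain ⟨M, hM⟩ := exists_monochromatic_triples (C := Prop × Prop × Prop × C) (2 * k + 1)
  refine ⟨M + 2, fun {α n} w S hS hn => ?_⟩
  have : Nonempty α := by
    by_contra h
    rw [not_nonempty_iff] at h
    have := hS (Subsingleton.elim (S ⟨0, by omega⟩) (S ⟨1, by omega⟩))
    simp [Fin.ext_iff] at this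
  obtain ⟨z, hz⟩ := exists_separating_points hS
  obtain ⟨T, -, hT, ⟨c₁, c₂, c₃, c⟩, hTc⟩ :=
    hM (fun a b d => (z a b ∈ S b, z a b ∈ S d, z b d ∈ S a, w (z a b))) univ
      (by rw [card_univ, Fintype.card_fin]; omega)
  set t := T.orderEmbOfFin hT
  have hcol : ∀ p q r : Fin (2 * k + 1), p < q → q < r →
      (z (t p) (t q) ∈ S (t q) ↔ c₁) ∧ (z (t p) (t q) ∈ S (t r) ↔ c₂) ∧
        (z (t q) (t r) ∈ S (t p) ↔ c₃) ∧ w (z (t p) (t q)) = c := by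
    intro p q r hpq hqr
    have := hTc _ (T.orderEmbOfFin_mem hT p) _ (T.orderEmbOfFin_mem hT q) _
      (T.orderEmbOfFin_mem hT r) (t.strictMono hpq) (t.strictMono hqr)
    simp only [Prod.mk.injEq] at this
    exact ⟨Iff.of_eq this.1, Iff.of_eq this.2.1, Iff.of_eq this.2.2.1, this.2.2.2⟩
  obtain ⟨x, hxz, hx⟩ := exists_interleaved_of_homogeneous (S ∘ t) (fun p q => z (t p) (t q))
    (fun p q hpq => hz _ _ (t.injective.ne hpq.ne))
    (fun p q r hpq hqr => ⟨(hcol p q r hpq hqr).1, (hcol p q r hpq hqr).2.1,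
      (hcol p q r hpq hqr).2.2.1⟩)
  obtain ⟨g, hg⟩ := exists_triangular_of_interleaved (S ∘ t) x hx
  refine ⟨c, c₃, c₂, x, t ∘ g, fun i => ?_, hg⟩
  obtain ⟨p, q, hpq, hq, hxi⟩ := hxz i
  rw [hxi]
  exact (hcol p q _ hpq hq).2.2.2

theorem lt_of_mem_tFam {ℓ r : ℕ} {M : CMat} (hM : M ∈ TFam ℓ r) (i : Fin M.rows)
    (j : Fin M.cols) : M.mat i j < r := by
  obtain ⟨a, b, ha, hb, -, rfl | rfl⟩ := hM
  · simp only [Imat]; split_ifs <;> assumption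
  · simp only [Tmat]; split_ifs <;> assumption

section TriangularMatrices

variable {ℓ a b c : ℕ}

theorem tmat3_eq_imat : Tmat3 ℓ a b a = Imat ℓ b a := by
  ext i j
  unfold Tmat3 Imat
  split_ifs with h₁ h₂ h₂ <;> first | rfl | (subst h₂; omega)

theorem tmat3_eq_tmat : Tmat3 ℓ a b b = Tmat ℓ a b := by
  ext i j
  unfold Tmat3 Tmat
  split_ifs <;> rfl

theorem tmat3_injective (hab : a ≠ b) : Function.Injective (Tmat3 ℓ a b c) := by
  intro i i' h
  by_contra hne
  wlog hlt : i < i' generalizing i i'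
  · exact this h.symm (Ne.symm hne) (lt_of_le_of_ne (not_lt.mp hlt) (Ne.symm hne))
  have := congrFun h i
  simp only [Tmat3, lt_irrefl, if_false, if_true, Fin.lt_def.mp hlt] at this
  exact hab this.symm

theorem tmat3_transpose_injective (hab : a ≠ b) : Function.Injective (Tmat3 ℓ a b c)ᵀ := by
  intro j j' h
  by_contra hne
  wlog hlt : j < j' generalizing j j'
  · exact this h.symm (Ne.symm hne) (lt_of_le_of_ne (not_lt.mp hlt) (Ne.symm hne))
  have := congrFun h j'
  simp only [Matrix.transpose_apply, Tmat3, lt_irrefl, if_false, if_true,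
    Fin.lt_def.mp hlt] at this
  exact hab this

theorem tmat3_mem_tFam {r : ℕ} (ha : a < r) (hb : b < r) (hab : a ≠ b) (hc : c = a ∨ c = b) :
    (⟨ℓ, ℓ, Tmat3 ℓ a b c⟩ : CMat) ∈ TFam ℓ r := by
  rcases hc with rfl | rfl
  · exact ⟨b, c, hb, ha, hab.symm, Or.inl (by rw [tmat3_eq_imat])⟩
  · exact ⟨a, c, ha, hb, hab, Or.inr (by rw [tmat3_eq_tmat])⟩

theorem tmat3_mem_tFam_sdiff (hℓ : 2 ≤ ℓ) (ha : a < 3) (hb : b < 3) (hab : a ≠ b)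
    (h2 : a = 2 ∨ b = 2) (hc : c = a ∨ c = b) :
    (⟨ℓ, ℓ, Tmat3 ℓ a b c⟩ : CMat) ∈ TFam ℓ 3 \ TFam ℓ 2 := by
  refine ⟨tmat3_mem_tFam ha hb hab hc, fun h => ?_⟩
  have hbelow := lt_of_mem_tFam h (⟨1, by omega⟩ : Fin ℓ) (⟨0, by omega⟩ : Fin ℓ)
  have hdiag := lt_of_mem_tFam h (⟨0, by omega⟩ : Fin ℓ) (⟨0, by omega⟩ : Fin ℓ)
  simp [Tmat3] at hbelow hdiag
  omega

end TriangularMatrices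

theorem isConfig_of_injective {k p m n : ℕ} {F : MatN k p} {A : MatN m n}
    (hF : Function.Injective F) (hFt : Function.Injective Fᵀ) (f : Fin k → Fin m)
    (g : Fin p → Fin n) (h : ∀ i j, A (f i) (g j) = F i j) : IsConfig F A :=
  ⟨f, g, fun i i' hi => hF (funext fun j => by rw [← h, ← h, hi]),
    fun j j' hj => hFt (funext fun i => by simp only [Matrix.transpose_apply]; rw [← h, ← h, hj]),
    h⟩

theorem eq_toNat_of_not_isConfig_zero_one {m n : ℕ} {A : MatN m n} (hA : RMat 3 A)
    (h01 : ¬ IsConfig !![0, 1] A) {r : Fin m} {j : Fin n} (h2 : A r j ≠ 2) :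
    A r j = (decide (∃ j', A r j' = 1)).toNat := by
  have := hA r j
  by_cases h : ∃ j', A r j' = 1
  · obtain ⟨j', hj'⟩ := h
    rw [decide_eq_true ⟨j', hj'⟩, Bool.toNat_true]
    by_contra h1
    have h0 : A r j = 0 := by omega
    have hjj' : j ≠ j' := fun h => by rw [h] at h0; omega
    refine h01 ⟨fun _ => r, ![j, j'], fun _ _ _ => Subsingleton.elim _ _, ?_, ?_⟩
    · intro u v huv
      fin_cases u <;> fin_cases v <;> simp_all [eq_comm]
    · intro u v
      fin_cases u; fin_cases v <;> simp [h0, hj']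
  · rw [decide_eq_false h, Bool.toNat_false]
    have : A r j ≠ 1 := fun h1 => h ⟨j, h1⟩
    omega

theorem exists_forall_le_of_avoidsFam {ℓ : ℕ} (hℓ : 2 ≤ ℓ) :
    ∃ N : ℕ, ∀ (m n : ℕ) (A : MatN m n), RMat 3 A → SimpleM A →
      AvoidsFam A ((TFam ℓ 3 \ TFam ℓ 2) ∪ {⟨1, 2, !![0, 1]⟩}) → n ≤ N := by
  classical
  obtain ⟨N, hN⟩ := exists_triangular_trace (C := Bool) ℓ
  refine ⟨N, fun m n A hA hS hAv => ?_⟩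
  by_contra! hn
  let Z (j : Fin n) : Finset (Fin m) := {r | A r j = 2}
  have hentry (r : Fin m) (j : Fin n) :
      A r j = if r ∈ Z j then 2 else (decide (∃ j', A r j' = 1)).toNat := by
    by_cases h2 : A r j = 2
    · simp [Z, h2]
    · simpa [Z, h2] using eq_toNat_of_not_isConfig_zero_one hA (hAv _ (Or.inr rfl)) h2
  have hZ : Function.Injective Z := fun j j' h =>
    hS j j' fun r => by rw [hentry r j, hentry r j', h]
  obtain ⟨c, below, above, x, g, hxc, hxg⟩ := hN (fun r => decide (∃ j', A r j' = 1)) Z hZ hn.le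
  let val (P : Prop) : ℕ := if P then 2 else c.toNat
  have hval (P : Prop) : val P < 3 := by
    unfold val; split_ifs <;> cases c <;> simp
  have hval_ne : val below ≠ val (¬below) := by
    by_cases hb : below <;> cases c <;> simp [val, hb]
  have hval_two : val below = 2 ∨ val (¬below) = 2 := by
    by_cases hb : below <;> simp [val, hb]
  have hval_above : val above = val below ∨ val above = val (¬below) := by
    by_cases ha : above <;> by_cases hb : below <;> simp [val, ha, hb]
  let F := Tmat3 ℓ (val below) (val (¬below)) (val above)
  have hF : (⟨ℓ, ℓ, F⟩ : CMat) ∈ TFam ℓ 3 \ TFam ℓ 2 :=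
    tmat3_mem_tFam_sdiff hℓ (hval _) (hval _) hval_ne hval_two hval_above
  have hconf : IsConfig F A := isConfig_of_injective (tmat3_injective hval_ne)
    (tmat3_transpose_injective hval_ne) x g fun i j => by
      rw [hentry, hxc]
      simp only [F, Tmat3, val, hxg]
      split_ifs <;> first | rfl | (exfalso; tauto)
  exact hAv _ (Or.inl hF) hconf

/-- For `ℓ ≥ 4`, `forb(m, 3, (𝒯_ℓ(3) \ 𝒯_ℓ(2)) ∪ {[0 1]})` is `Θ(1)`:
it is bounded by a constant depending only on `ℓ`. -/
theorem stmt3 (ℓ : ℕ) (hℓ : 4 ≤ ℓ) :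
    ∃ c : ℕ, ∀ m : ℕ, 1 ≤ m →
      forb m 3 ((TFam ℓ 3 \ TFam ℓ 2) ∪ {⟨1, 2, !![0, 1]⟩}) ≤ c := by
  obtain ⟨N, hN⟩ := exists_forall_le_of_avoidsFam (ℓ := ℓ) (by omega)
  exact ⟨N, fun m _ => csSup_le' fun n ⟨A, hA, hS, hAv⟩ => hN m n A hA hS hAv⟩
end

section
/- Let ℓ ≥ 2 and let I₂ denote the 2×2 identity matrix (equivalently, F_{0,1,1,0}). Then forb(m, 3, (𝒯_ℓ(3) \ 𝒯_ℓ(2)) ∪ {I₂}) is Θ(forbmax(m, I₂)); in particular there exist constants c₁, c₂ > 0 such that for all m ≥ 1, c₁ · m ≤ forb(m, 3, (𝒯_ℓ(3) \ 𝒯_ℓ(2)) ∪ {I₂}) ≤ c₂ · m. -/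
/-!
Lower bound: the `m × (m + 1)` matrix with a `1` at `(i, j)` iff `i < j` is simple, has no entry
`2` and avoids `I₂`. It also shows `forb(m, 2, I₂) = m + 1`, since the 1-sets of the columns of an
`I₂`-free `(0,1)`-matrix are nested.

Upper bound: avoiding `I₂` means that of any two columns, one has no `0` in the rows where the
other has a `1`. Group the columns by their 1-set and the 1-sets by size (`m + 1` sizes). Among many
columns with one 1-set (their `{0,2}`-parts are distinct), or many distinct 1-sets of one size,
Ramsey's theorem for pairs gives a long sequence `c₀, c₁, …` in which each pair `i < j` is
separated by a row reading `u` in `cᵢ`, `v` in `cⱼ` and only `u` or `v` to the right of `cᵢ`, with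
`(u, v) = (2, 0)`, resp. `(1, 2)`. Ramsey's theorem for triples on these rows yields `I_ℓ(v, u)` or
a staircase with `u` on and `v` above the diagonal; Ramsey for pairs makes it constant below the
diagonal, and then it contains `I_ℓ(u, v)` or some `T_ℓ(w, v)`. All of these contain a `2`, so are
forbidden, and each group and each size class has boundedly many members.
-/

open Finset

section Ramsey

variable (κ : Type*)

theorem exists_strictMono_endHomogeneous {d : ℕ}
    (hd : ∀ s, ∃ N, ∀ χ : (Fin d → Fin N) → κ, ∃ g : Fin s → Fin N, StrictMono g ∧
      ∃ c, ∀ t : Fin d → Fin s, StrictMono t → χ (g ∘ t) = c) (L : ℕ) :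
    ∃ N, ∀ χ : (Fin (d + 1) → Fin N) → κ, ∃ g : Fin L → Fin N, StrictMono g ∧
      ∃ col : Fin L → κ, ∀ t : Fin (d + 1) → Fin L, StrictMono t → χ (g ∘ t) = col (t 0) := by
  induction L with
  | zero => exact ⟨0, fun _ => ⟨Fin.elim0, fun i => i.elim0, Fin.elim0, fun t _ => (t 0).elim0⟩⟩
  | succ L ih =>
    obtain ⟨N, hN⟩ := ih
    obtain ⟨R, hR⟩ := hd N
    refine ⟨R + 1, fun χ => ?_⟩
    obtain ⟨h, hh, c, hc⟩ := hR fun y => χ (Fin.cons 0 (Fin.succ ∘ y))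
    obtain ⟨g, hg, col, hcol⟩ := hN fun x => χ (Fin.succ ∘ h ∘ x)
    have hsucc : StrictMono (Fin.succ ∘ h ∘ g) := Fin.strictMono_succ.comp (hh.comp hg)
    refine ⟨Fin.cons 0 (Fin.succ ∘ h ∘ g), Fin.strictMono_cons.2 ⟨fun _ => Fin.succ_pos _, hsucc⟩,
      Fin.cons c col, fun t ht => ?_⟩
    rcases Fin.eq_zero_or_eq_succ (t 0) with h0 | ⟨i, hi⟩
    · obtain ⟨t', rfl⟩ : ∃ t' : Fin d → Fin L, t = Fin.cons 0 (Fin.succ ∘ t') :=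
        ⟨fun k => (t k.succ).pred (h0 ▸ ht (Fin.succ_pos k)).ne',
          funext (Fin.cases h0 fun k => by simp)⟩
      have ht' : StrictMono t' := fun a b hab =>
        Fin.succ_lt_succ_iff.1 ((Fin.strictMono_cons.1 ht).2 hab)
      simpa only [Fin.comp_cons, ← Function.comp_assoc, Fin.cons_comp_succ, Fin.cons_zero]
        using hc (g ∘ t') (hg.comp ht')
    · obtain ⟨t', rfl⟩ : ∃ t' : Fin (d + 1) → Fin L, t = Fin.succ ∘ t' :=
        ⟨fun k => (t k).pred (hi ▸ Fin.succ_pos i |>.trans_le (ht.monotone (Fin.zero_le k))).ne',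
          funext fun k => by simp⟩
      have ht' : StrictMono t' := fun a b hab => Fin.succ_lt_succ_iff.1 (ht hab)
      simpa only [← Function.comp_assoc, Fin.cons_comp_succ, Function.comp_apply, Fin.cons_succ]
        using hcol t' ht'

variable [Fintype κ] [Nonempty κ]

theorem exists_strictMono_homogeneous (d s : ℕ) :
    ∃ N, ∀ χ : (Fin d → Fin N) → κ, ∃ g : Fin s → Fin N, StrictMono g ∧
      ∃ c, ∀ t : Fin d → Fin s, StrictMono t → χ (g ∘ t) = c := by
  classical
  induction d generalizing s with
  | zero =>
    exact ⟨s, fun χ => ⟨id, strictMono_id, χ Fin.elim0,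
      fun _ _ => congrArg χ (Subsingleton.elim _ _)⟩⟩
  | succ d ih =>
    obtain ⟨N, hN⟩ := exists_strictMono_endHomogeneous κ ih (Fintype.card κ * s)
    refine ⟨N, fun χ => ?_⟩
    obtain ⟨g, hg, col, hcol⟩ := hN χ
    obtain ⟨c, hc⟩ := Fintype.exists_le_card_fiber_of_mul_le_card col (n := s) (by simp)
    obtain ⟨T, hT, hTs⟩ := exists_subset_card_eq hc
    let e := T.orderEmbOfFin hTs
    refine ⟨g ∘ e, hg.comp e.strictMono, c, fun t ht => ?_⟩
    rw [Function.comp_assoc, hcol _ (e.strictMono.comp ht)]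
    exact (mem_filter.1 (hT (T.orderEmbOfFin_mem hTs _))).2

theorem exists_strictMono_homogeneous_pairs (s : ℕ) :
    ∃ N, ∀ χ : Fin N → Fin N → κ, ∃ g : Fin s → Fin N, StrictMono g ∧
      ∃ c, ∀ i j, i < j → χ (g i) (g j) = c := by
  obtain ⟨N, hN⟩ := exists_strictMono_homogeneous κ 2 s
  refine ⟨N, fun χ => ?_⟩
  obtain ⟨g, hg, c, hc⟩ := hN fun x => χ (x 0) (x 1)
  exact ⟨g, hg, c, fun i j hij => hc ![i, j] (by simpa using hij)⟩

theorem exists_strictMono_homogeneous_triples (s : ℕ) :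
    ∃ N, ∀ χ : Fin N → Fin N → Fin N → κ, ∃ g : Fin s → Fin N, StrictMono g ∧
      ∃ c, ∀ i j k, i < j → j < k → χ (g i) (g j) (g k) = c := by
  obtain ⟨N, hN⟩ := exists_strictMono_homogeneous κ 3 s
  refine ⟨N, fun χ => ?_⟩
  obtain ⟨g, hg, c, hc⟩ := hN fun x => χ (x 0) (x 1) (x 2)
  exact ⟨g, hg, c, fun i j k hij hjk => hc ![i, j, k] (by simpa using ⟨hij, hjk⟩)⟩

theorem exists_injective_chain (s : ℕ) :
    ∃ N, ∀ P : Fin N → Fin N → Prop, (∀ i j, i ≠ j → P i j ∨ P j i) →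
      ∃ g : Fin s → Fin N, Function.Injective g ∧ ∀ i j, i < j → P (g i) (g j) := by
  classical
  obtain ⟨N, hN⟩ := exists_strictMono_homogeneous_pairs Bool s
  refine ⟨N, fun P hP => ?_⟩
  obtain ⟨g, hg, c, hc⟩ := hN fun i j => decide (P i j)
  cases c
  · refine ⟨g ∘ Fin.rev, hg.injective.comp Fin.rev_injective, fun i j hij => ?_⟩
    have hlt : Fin.rev j < Fin.rev i := Fin.rev_lt_rev.2 hij
    exact (hP _ _ (hg.injective.ne hlt.ne')).resolve_right (by simpa using hc _ _ hlt)
  · exact ⟨g, hg.injective, fun i j hij => by simpa using hc i j hij⟩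

end Ramsey

section Configurations

variable {k p m n : ℕ} {F : MatN k p} {A : MatN m n}

theorem IsConfig.of_injective (hF : Function.Injective F) (r : Fin k → Fin m)
    {c : Fin p → Fin n} (hc : Function.Injective c) (h : ∀ i j, A (r i) (c j) = F i j) :
    IsConfig F A :=
  ⟨r, c, fun i i' hii' => hF (funext fun j => by rw [← h, ← h, hii']), hc, h⟩

theorem IsConfig.entry_lt {r : ℕ} (hA : RMat r A) (h : IsConfig F A) (i : Fin k) (j : Fin p) :
    F i j < r := by
  obtain ⟨_, _, -, -, hfg⟩ := h
  exact hfg i j ▸ hA _ _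

theorem Imat_injective {ℓ a b : ℕ} (hab : a ≠ b) : Function.Injective (Imat ℓ a b) := by
  intro i i' h
  by_contra hne
  exact hab (by simpa [Imat, Ne.symm hne] using congrFun h i)

theorem Tmat_injective {ℓ a b : ℕ} (hab : a ≠ b) : Function.Injective (Tmat ℓ a b) := by
  intro i i' h
  by_contra hne
  rcases lt_or_gt_of_ne hne with hlt | hlt
  · simpa [Tmat, hlt, Ne.symm hab] using congrFun h i
  · simpa [Tmat, hlt, hab] using congrFun h i'

theorem mem_TFam_iff_forall_entry_lt {ℓ r s : ℕ} (hℓ : 2 ≤ ℓ) {M : CMat} (hM : M ∈ TFam ℓ s) :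
    M ∈ TFam ℓ r ↔ ∀ i j, M.mat i j < r := by
  refine ⟨?_, fun h => ?_⟩
  · rintro ⟨a, b, ha, hb, -, rfl | rfl⟩ i j <;> dsimp only [Imat, Tmat] <;> split_ifs <;>
      assumption
  · obtain ⟨a, b, -, -, hab, rfl | rfl⟩ := hM
    · replace h : ∀ i j, Imat ℓ a b i j < r := h
      exact ⟨a, b, by simpa [Imat] using h ⟨0, by omega⟩ ⟨0, by omega⟩,
        by simpa [Imat, Fin.ext_iff] using h ⟨0, by omega⟩ ⟨1, by omega⟩, hab, Or.inl rfl⟩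
    · replace h : ∀ i j, Tmat ℓ a b i j < r := h
      exact ⟨a, b, by simpa [Tmat] using h ⟨1, by omega⟩ ⟨0, by omega⟩,
        by simpa [Tmat] using h ⟨0, by omega⟩ ⟨0, by omega⟩, hab, Or.inr rfl⟩

theorem ones_dichotomy (hA : ¬IsConfig !![1, 0; 0, 1] A) {j k : Fin n} (hjk : j ≠ k) :
    (∀ x, A x j = 1 → A x k ≠ 0) ∨ (∀ x, A x k = 1 → A x j ≠ 0) := by
  by_contra! h
  obtain ⟨⟨x, hxj, hxk⟩, ⟨y, hyk, hyj⟩⟩ := h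
  have hI : Function.Injective !![1, 0; 0, 1] := fun i i' h => by
    have := congrFun h i
    fin_cases i <;> fin_cases i' <;> simp_all
  refine hA (IsConfig.of_injective hI ![x, y] (c := ![j, k]) ?_ ?_)
  · exact Fin.cons_injective_iff.2 ⟨by simpa using hjk, Function.injective_of_subsingleton _⟩
  · intro i i'
    fin_cases i <;> fin_cases i' <;> simp [*]

end Configurations

section Staircases

variable {m n : ℕ} {A : MatN m n}

def IsStaircase {N : ℕ} (A : MatN m n) (u v : ℕ) (W : ℕ → Prop) (R : Fin N → Fin m)
    (C : Fin N → Fin n) : Prop :=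
  Function.Injective C ∧ (∀ i, A (R i) (C i) = u) ∧ (∀ i j, i < j → A (R i) (C j) = v) ∧
    ∀ i j, j < i → W (A (R i) (C j))

theorem isConfig_Tmat_of_staircase {ℓ v w : ℕ} (hwv : w ≠ v) {R : Fin (2 * ℓ) → Fin m}
    {C : Fin (2 * ℓ) → Fin n} (hC : Function.Injective C)
    (habove : ∀ i j, i < j → A (R i) (C j) = v) (hbelow : ∀ i j, j < i → A (R i) (C j) = w) :
    IsConfig (Tmat ℓ w v) A := by
  refine IsConfig.of_injective (Tmat_injective hwv) (fun t => R ⟨2 * t, by omega⟩)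
    (c := fun s => C ⟨2 * s + 1, by omega⟩) (fun s s' h => ?_) fun t s => ?_
  · have := Fin.mk.inj (hC h)
    exact Fin.ext (by omega)
  · by_cases hst : (s : ℕ) < t
    · simpa only [Tmat, if_pos hst] using hbelow _ _ (Fin.mk_lt_mk.2 (by omega))
    · simpa only [Tmat, if_neg hst] using habove _ _ (Fin.mk_lt_mk.2 (by omega))

theorem exists_not_isStaircase (r ℓ : ℕ) [NeZero r] (hℓ : 0 < ℓ) :
    ∃ N, ∀ {m n : ℕ} (A : MatN m n) (u v : ℕ) (W : ℕ → Prop) (R : Fin N → Fin m)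
      (C : Fin N → Fin n), RMat r A → u ≠ v → ¬IsConfig (Imat ℓ u v) A →
      (∀ w, W w → w ≠ v → ¬IsConfig (Tmat ℓ w v) A) → ¬IsStaircase A u v W R C := by
  obtain ⟨N, hN⟩ := exists_strictMono_homogeneous_pairs (Fin r) (2 * ℓ)
  refine ⟨N, fun A u v W R C hA huv hI hT ⟨hC, hdiag, habove, hbelow⟩ => ?_⟩
  obtain ⟨g, hg, w, hw⟩ := hN fun j i => (⟨A (R i) (C j), hA _ _⟩ : Fin r)
  have hbelow' : ∀ i j, j < i → A (R (g i)) (C (g j)) = w := fun i j h =>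
    congrArg Fin.val (hw j i h)
  have habove' : ∀ i j, i < j → A (R (g i)) (C (g j)) = v := fun i j h => habove _ _ (hg h)
  have hCg : Function.Injective (C ∘ g) := hC.comp hg.injective
  by_cases hwv : (w : ℕ) = v
  · let e : Fin ℓ → Fin (2 * ℓ) := Fin.castLE (by omega)
    have he : StrictMono e := fun _ _ h => h
    refine hI (IsConfig.of_injective (Imat_injective huv) (fun i => R (g (e i)))
      (c := fun j => C (g (e j))) (hCg.comp he.injective) fun i j => ?_)
    rcases lt_trichotomy i j with h | rfl | h
    · simpa [Imat, h.ne] using habove' (e i) (e j) (he h)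
    · simpa [Imat] using hdiag (g (e i))
    · simpa [Imat, h.ne', hwv] using hbelow' (e i) (e j) (he h)
  · have h01 : (⟨0, by omega⟩ : Fin (2 * ℓ)) < ⟨1, by omega⟩ := Fin.mk_lt_mk.2 zero_lt_one
    exact hT w (hbelow' _ _ h01 ▸ hbelow _ _ (hg h01)) hwv
      (isConfig_Tmat_of_staircase hwv hCg habove' hbelow')

def IsSeparatingRow {Q : ℕ} (A : MatN m n) (u v : ℕ) (W : ℕ → Prop) (c : Fin Q → Fin n)
    (i j : Fin Q) (x : Fin m) : Prop :=
  A x (c i) = u ∧ A x (c j) = v ∧ (∀ s, i < s → A x (c s) = u ∨ A x (c s) = v) ∧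
    ∀ s, s < i → W (A x (c s))

section SeparatingRows

variable {p : ℕ} {u v : ℕ} {W : ℕ → Prop} {c : Fin p → Fin n} {z : Fin p → Fin p → Fin m}

theorem IsSeparatingRow.comp {q : ℕ} {g : Fin q → Fin p} (hg : StrictMono g) {i j : Fin q}
    {x : Fin m} (h : IsSeparatingRow A u v W c (g i) (g j) x) :
    IsSeparatingRow A u v W (c ∘ g) i j x :=
  ⟨h.1, h.2.1, fun _ hs => h.2.2.1 _ (hg hs), fun _ hs => h.2.2.2 _ (hg hs)⟩

theorem exists_isStaircase_of_forall_right_eq {N : ℕ} (hc : Function.Injective c)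
    (hz : ∀ x y, x < y → IsSeparatingRow A u v W c x y (z x y)) (hp : 2 * N ≤ p)
    (hright : ∀ x y k, x < y → y < k → A (z x y) (c k) = v) :
    ∃ (R : Fin N → Fin m) (C : Fin N → Fin n), IsStaircase A u v W R C := by
  let φ : Fin N → Fin p := fun i => ⟨2 * i, by omega⟩
  let ψ : Fin N → Fin p := fun i => ⟨2 * i + 1, by omega⟩
  have hφψ : ∀ i, φ i < ψ i := fun i => Fin.mk_lt_mk.2 (by omega)
  have hψφ : ∀ i j, i < j → ψ i < φ j := fun i j h => Fin.mk_lt_mk.2 (by omega)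
  have hφ : StrictMono φ := fun i j h => (hφψ i).trans (hψφ i j h)
  exact ⟨fun i => z (φ i) (ψ i), fun i => c (φ i), hc.comp hφ.injective,
    fun i => (hz _ _ (hφψ i)).1, fun i j h => hright _ _ _ (hφψ i) (hψφ i j h),
    fun i j h => (hz _ _ (hφψ i)).2.2.2 _ (hφ h)⟩

theorem exists_isStaircase_of_forall_middle_eq {N : ℕ} (hc : Function.Injective c)
    (hz : ∀ x y, x < y → IsSeparatingRow A u v W c x y (z x y)) (hp : N < p)
    (hmiddle : ∀ x y k, x < y → y < k → A (z x k) (c y) = v) :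
    ∃ (R : Fin N → Fin m) (C : Fin N → Fin n), IsStaircase A u v W R C := by
  let φ : Fin N → Fin p := Fin.castLE hp.le
  let last : Fin p := ⟨p - 1, by omega⟩
  have hφ : StrictMono φ := fun _ _ h => h
  have hlast : ∀ i, φ i < last := fun i => Fin.mk_lt_mk.2 (by omega)
  exact ⟨fun i => z (φ i) last, fun i => c (φ i), hc.comp hφ.injective,
    fun i => (hz _ _ (hlast i)).1, fun i j h => hmiddle _ _ _ (hφ h) (hlast j),
    fun i j h => (hz _ _ (hlast i)).2.2.2 _ (hφ h)⟩

theorem isConfig_Imat_of_forall_ne {ℓ : ℕ} (hc : Function.Injective c)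
    (hz : ∀ x y, x < y → IsSeparatingRow A u v W c x y (z x y))
    (hp : ℓ < p) (huv : u ≠ v)
    (hright : ∀ x y k, x < y → y < k → A (z x y) (c k) ≠ v)
    (hmiddle : ∀ x y k, x < y → y < k → A (z x k) (c y) ≠ v) :
    IsConfig (Imat ℓ v u) A := by
  let σ : Fin ℓ → Fin p := fun t => ⟨t + 1, by omega⟩
  let x₀ : Fin p := ⟨0, by omega⟩
  have hx₀ : ∀ t, x₀ < σ t := fun t => Fin.mk_lt_mk.2 (by omega)
  have hσ : StrictMono σ := fun t s h => Fin.mk_lt_mk.2 (by simpa using h)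
  refine IsConfig.of_injective (Imat_injective huv.symm) (fun t => z x₀ (σ t))
    (hc.comp hσ.injective) fun t s => ?_
  obtain ⟨-, hv, huv', -⟩ := hz _ _ (hx₀ t)
  rcases eq_or_ne t s with rfl | hts
  · simpa [Imat] using hv
  have hne : A (z x₀ (σ t)) (c (σ s)) ≠ v := by
    rcases lt_or_gt_of_ne hts with h | h
    exacts [hright _ _ _ (hx₀ t) (hσ h), hmiddle _ _ _ (hx₀ s) (hσ h)]
  simpa [Imat, hts, hne] using huv' _ (hx₀ s)

end SeparatingRows

theorem exists_not_forall_isSeparatingRow (r ℓ : ℕ) [NeZero r] (hℓ : 0 < ℓ) :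
    ∃ Q, ∀ {m n : ℕ} (A : MatN m n) (u v : ℕ) (W : ℕ → Prop) (c : Fin Q → Fin n),
      RMat r A → u ≠ v → ¬IsConfig (Imat ℓ u v) A → ¬IsConfig (Imat ℓ v u) A →
      (∀ w, W w → w ≠ v → ¬IsConfig (Tmat ℓ w v) A) → Function.Injective c →
      ¬∀ i j, i < j → ∃ x, IsSeparatingRow A u v W c i j x := by
  obtain ⟨N, hN⟩ := exists_not_isStaircase r ℓ hℓ
  obtain ⟨Q, hQ⟩ := exists_strictMono_homogeneous_triples (Bool × Bool) (2 * N + ℓ + 1)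
  refine ⟨Q, ?_⟩
  intro m n A u v W c hA huv hIuv hIvu hT hc hsep
  have : Nonempty (Fin m) := by
    obtain ⟨g, hg, -⟩ := hQ fun _ _ _ => (true, true)
    obtain ⟨x, -⟩ := hsep _ _ (hg (Fin.mk_lt_mk.2 zero_lt_one :
      (⟨0, by omega⟩ : Fin (2 * N + ℓ + 1)) < ⟨1, by omega⟩))
    exact ⟨x⟩
  have : ∀ i j, ∃ x, i < j → IsSeparatingRow A u v W c i j x := fun i j =>
    if h : i < j then (hsep i j h).imp fun _ hx _ => hx
    else ⟨Classical.arbitrary _, (absurd · h)⟩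
  choose z hz using this
  classical
  obtain ⟨g, hg, ⟨b₁, b₂⟩, hcol⟩ := hQ fun x y k =>
    (decide (A (z x y) (c k) = v), decide (A (z x k) (c y) = v))
  have hcg := hc.comp hg.injective
  have hzg : ∀ x y, x < y → IsSeparatingRow A u v W (c ∘ g) x y (z (g x) (g y)) :=
    fun x y h => (hz _ _ (hg h)).comp hg
  cases b₁
  · cases b₂ <;> simp only [Prod.mk.injEq, decide_eq_true_eq, decide_eq_false_iff_not] at hcol
    · exact hIvu (isConfig_Imat_of_forall_ne hcg hzg (by omega) huv
        (fun x y k h h' => (hcol x y k h h').1) fun x y k h h' => (hcol x y k h h').2)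
    · obtain ⟨R, C, hRC⟩ := exists_isStaircase_of_forall_middle_eq (N := N) hcg hzg (by omega)
        fun x y k h h' => (hcol x y k h h').2
      exact hN A u v W R C hA huv hIuv hT hRC
  · simp only [Prod.mk.injEq, decide_eq_true_eq] at hcol
    obtain ⟨R, C, hRC⟩ := exists_isStaircase_of_forall_right_eq (N := N) hcg hzg (by omega)
      fun x y k h h' => (hcol x y k h h').1
    exact hN A u v W R C hA huv hIuv hT hRC

end Staircases

theorem Finset.exists_injective_fin_of_le_card {α : Type*} {s : Finset α} {k : ℕ}
    (h : k ≤ #s) : ∃ f : Fin k → α, Function.Injective f ∧ ∀ i, f i ∈ s := by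
  obtain ⟨f⟩ := Function.Embedding.nonempty_of_card_le (α := Fin k) (β := s) (by simpa using h)
  exact ⟨fun i => f i, Subtype.val_injective.comp f.injective, fun i => (f i).2⟩

section UpperBound

variable {ℓ m n : ℕ} {A : MatN m n}

def ones (A : MatN m n) (j : Fin n) : Finset (Fin m) := {x | A x j = 1}

theorem mem_ones {x : Fin m} {j : Fin n} : x ∈ ones A j ↔ A x j = 1 := by simp [ones]

theorem not_isConfig_Imat (hℓ : 2 ≤ ℓ) (hA : AvoidsFam A (TFam ℓ 3 \ TFam ℓ 2)) {a b : ℕ}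
    (ha : a < 3) (hb : b < 3) (hab : a ≠ b) (h2 : a = 2 ∨ b = 2) :
    ¬IsConfig (Imat ℓ a b) A := by
  have hmem : (⟨ℓ, ℓ, Imat ℓ a b⟩ : CMat) ∈ TFam ℓ 3 := ⟨a, b, ha, hb, hab, Or.inl rfl⟩
  refine hA _ ⟨hmem, fun h => ?_⟩
  have h : ∀ i j, Imat ℓ a b i j < 2 := (mem_TFam_iff_forall_entry_lt hℓ hmem).1 h
  rcases h2 with rfl | rfl
  · simpa [Imat] using h ⟨0, by omega⟩ ⟨0, by omega⟩
  · simpa [Imat, Fin.ext_iff] using h ⟨0, by omega⟩ ⟨1, by omega⟩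

theorem not_isConfig_Tmat (hℓ : 2 ≤ ℓ) (hA : AvoidsFam A (TFam ℓ 3 \ TFam ℓ 2)) {a b : ℕ}
    (ha : a < 3) (hb : b < 3) (hab : a ≠ b) (h2 : a = 2 ∨ b = 2) :
    ¬IsConfig (Tmat ℓ a b) A := by
  have hmem : (⟨ℓ, ℓ, Tmat ℓ a b⟩ : CMat) ∈ TFam ℓ 3 := ⟨a, b, ha, hb, hab, Or.inr rfl⟩
  refine hA _ ⟨hmem, fun h => ?_⟩
  have h : ∀ i j, Tmat ℓ a b i j < 2 := (mem_TFam_iff_forall_entry_lt hℓ hmem).1 h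
  rcases h2 with rfl | rfl
  · simpa [Tmat] using h ⟨1, by omega⟩ ⟨0, by omega⟩
  · simpa [Tmat] using h ⟨0, by omega⟩ ⟨0, by omega⟩

theorem exists_card_filter_ones_eq_le (hℓ : 2 ≤ ℓ) :
    ∃ X, ∀ {m n : ℕ} (A : MatN m n), RMat 3 A → SimpleM A →
      AvoidsFam A (TFam ℓ 3 \ TFam ℓ 2) → ∀ O, #{j | ones A j = O} ≤ X := by
  obtain ⟨Q, hQ⟩ := exists_not_forall_isSeparatingRow 3 ℓ (by omega)
  obtain ⟨X, hX⟩ := exists_injective_chain Q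
  refine ⟨X, ?_⟩
  intro m n A hA hS hF O
  by_contra! hlt
  obtain ⟨c, hc, hcO⟩ := Finset.exists_injective_fin_of_le_card hlt.le
  simp only [mem_filter, mem_univ, true_and] at hcO
  have hsame : ∀ x i s, A x (c i) = 1 → A x (c s) = 1 := fun x i s h =>
    mem_ones.1 (by rw [hcO s, ← hcO i]; exact mem_ones.2 h)
  have hrow : ∀ x i, A x (c i) ≠ 1 → ∀ s, A x (c s) = 2 ∨ A x (c s) = 0 := fun x i hx s => by
    have := hA x (c s)
    have := mt (hsame x s i) hx
    omega
  obtain ⟨g, hg, hchain⟩ := hX (fun i j => ∃ x, A x (c i) = 2 ∧ A x (c j) = 0) fun i j hij => by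
    obtain ⟨x, hx⟩ : ∃ x, A x (c i) ≠ A x (c j) := by
      by_contra! h
      exact hij (hc (hS _ _ h))
    have hi : A x (c i) ≠ 1 := fun h1 => hx (h1.trans (hsame x i j h1).symm)
    rcases hrow x i hi i with h | h <;> rcases hrow x i hi j with h' | h'
    exacts [absurd (h.trans h'.symm) hx, Or.inl ⟨x, h, h'⟩, Or.inr ⟨x, h', h⟩,
      absurd (h.trans h'.symm) hx]
  refine hQ A 2 0 (fun w => w = 2 ∨ w = 0) (c ∘ g) hA (by norm_num)
    (not_isConfig_Imat hℓ hF (by norm_num) (by norm_num) (by norm_num) (by norm_num))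
    (not_isConfig_Imat hℓ hF (by norm_num) (by norm_num) (by norm_num) (by norm_num))
    (fun w hw hw0 => ?_) (hc.comp hg) fun i j hij => ?_
  · obtain rfl : w = 2 := hw.resolve_right hw0
    exact not_isConfig_Tmat hℓ hF (by norm_num) (by norm_num) (by norm_num) (by norm_num)
  · obtain ⟨x, hx2, hx0⟩ := hchain i j hij
    have hx : A x (c (g i)) ≠ 1 := by omega
    exact ⟨x, hx2, hx0, fun _ _ => hrow x _ hx _, fun _ _ => hrow x _ hx _⟩

theorem exists_card_filter_card_ones_eq_le (hℓ : 2 ≤ ℓ) :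
    ∃ Y, ∀ {m n : ℕ} (A : MatN m n), RMat 3 A → ¬IsConfig !![1, 0; 0, 1] A →
      AvoidsFam A (TFam ℓ 3 \ TFam ℓ 2) →
      ∀ k, #{O ∈ univ.image (ones A) | #O = k} ≤ Y := by
  obtain ⟨Q, hQ⟩ := exists_not_forall_isSeparatingRow 3 ℓ (by omega)
  obtain ⟨Y, hY⟩ := exists_injective_chain Q
  refine ⟨Y, ?_⟩
  intro m n A hA hI₂ hF k
  by_contra! hlt
  obtain ⟨S, hS, hSmem⟩ := Finset.exists_injective_fin_of_le_card hlt.le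
  simp only [mem_filter, mem_image, mem_univ, true_and] at hSmem
  choose c hc using fun i => (hSmem i).1
  have hcard : ∀ i, #(ones A (c i)) = k := fun i => hc i ▸ (hSmem i).2
  have hinj : Function.Injective (ones A ∘ c) := fun i j h => hS (by simpa [hc] using h)
  obtain ⟨g, hg, hchain⟩ := hY (fun i j => ∀ x, A x (c i) = 1 → A x (c j) ≠ 0)
    fun i j hij => ones_dichotomy hI₂ fun h => hij (hinj (congrArg (ones A) h))
  refine hQ A 1 2 (· < 3) (c ∘ g) hA (by norm_num)
    (not_isConfig_Imat hℓ hF (by norm_num) (by norm_num) (by norm_num) (by norm_num))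
    (not_isConfig_Imat hℓ hF (by norm_num) (by norm_num) (by norm_num) (by norm_num))
    (fun w hw hw2 => not_isConfig_Tmat hℓ hF hw (by norm_num) hw2 (by norm_num))
    (hinj.of_comp.comp hg) fun i j hij => ?_
  have hne : ones A (c (g i)) ≠ ones A (c (g j)) := (hinj.comp hg).ne hij.ne
  obtain ⟨x, hxi, hxj⟩ := not_subset.1 fun hsub =>
    hne (eq_of_subset_of_card_le hsub (by rw [hcard, hcard]))
  rw [mem_ones] at hxi hxj
  have h0 := hchain i j hij x hxi
  have h3 := hA x (c (g j))
  refine ⟨x, hxi, show A x (c (g j)) = 2 by omega, fun s hs => ?_, fun _ _ => hA _ _⟩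
  have := hchain i s hs x hxi
  have := hA x (c (g s))
  show A x (c (g s)) = 1 ∨ A x (c (g s)) = 2
  omega

theorem exists_card_le_of_avoidsFam (hℓ : 2 ≤ ℓ) :
    ∃ K, ∀ m n (A : MatN m n), RMat 3 A → SimpleM A →
      AvoidsFam A ((TFam ℓ 3 \ TFam ℓ 2) ∪ {⟨2, 2, !![1, 0; 0, 1]⟩}) → n ≤ K * (m + 1) := by
  obtain ⟨X, hX⟩ := exists_card_filter_ones_eq_le hℓ
  obtain ⟨Y, hY⟩ := exists_card_filter_card_ones_eq_le hℓ
  refine ⟨X * Y, fun m n A hA hS hF => ?_⟩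
  have hF' : AvoidsFam A (TFam ℓ 3 \ TFam ℓ 2) := fun F hF₁ => hF F (Or.inl hF₁)
  have hI₂ : ¬IsConfig !![1, 0; 0, 1] A := hF _ (Or.inr rfl)
  have hsizes : #((univ.image (ones A)).image card) ≤ m + 1 := by
    refine (card_le_card (t := range (m + 1)) ?_).trans (card_range _).le
    refine image_subset_iff.2 fun O _ => mem_range.2 (Nat.lt_succ_of_le ?_)
    simpa using card_le_univ O
  calc n = #(univ : Finset (Fin n)) := by simp
    _ ≤ X * #(univ.image (ones A)) :=
      card_le_mul_card_image _ _ fun O _ => hX A hA hS hF' O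
    _ ≤ X * (Y * #((univ.image (ones A)).image card)) := by
      gcongr
      exact card_le_mul_card_image _ _ fun k _ => hY A hA hI₂ hF' k
    _ ≤ X * Y * (m + 1) := by rw [← mul_assoc]; gcongr

end UpperBound

section Forb

variable {m n r : ℕ} {𝓕 : Set CMat} {B : ℕ}

theorem le_forb (hB : ∀ n (A : MatN m n), RMat r A → SimpleM A → AvoidsFam A 𝓕 → n ≤ B)
    (A : MatN m n) (hA : RMat r A) (hS : SimpleM A) (hF : AvoidsFam A 𝓕) : n ≤ forb m r 𝓕 :=
  le_csSup ⟨B, fun _ ⟨A, hA, hS, hF⟩ => hB _ A hA hS hF⟩ ⟨A, hA, hS, hF⟩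

theorem forb_le_s4 (hB : ∀ n (A : MatN m n), RMat r A → SimpleM A → AvoidsFam A 𝓕 → n ≤ B) :
    forb m r 𝓕 ≤ B :=
  csSup_le' fun _ ⟨A, hA, hS, hF⟩ => hB _ A hA hS hF

end Forb

section IdentityFree

variable {m n : ℕ} {A : MatN m n}

theorem avoidsFam_I₂_iff :
    AvoidsFam A {⟨2, 2, !![1, 0; 0, 1]⟩} ↔ ¬IsConfig !![1, 0; 0, 1] A := by
  simp [AvoidsFam]

def chainMatrix (m : ℕ) : MatN m (m + 1) := fun i j => if (i : ℕ) < j then 1 else 0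

theorem chainMatrix_rMat : RMat 2 (chainMatrix m) := fun i j => by
  unfold chainMatrix; split_ifs <;> norm_num

theorem chainMatrix_simple : SimpleM (chainMatrix m) := by
  intro j k h
  by_contra hjk
  rcases lt_or_gt_of_ne hjk with hlt | hlt
  · simpa [chainMatrix, hlt] using h ⟨j, by omega⟩
  · simpa [chainMatrix, hlt] using h ⟨k, by omega⟩

theorem chainMatrix_not_isConfig_I₂ : ¬IsConfig !![1, 0; 0, 1] (chainMatrix m) := by
  rintro ⟨f, g, -, -, h⟩
  have h00 := h 0 0
  have h01 := h 0 1
  have h10 := h 1 0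
  have h11 := h 1 1
  simp [chainMatrix] at h00 h01 h10 h11
  omega

theorem chainMatrix_avoidsFam {ℓ : ℕ} (hℓ : 2 ≤ ℓ) :
    AvoidsFam (chainMatrix m) ((TFam ℓ 3 \ TFam ℓ 2) ∪ {⟨2, 2, !![1, 0; 0, 1]⟩}) := by
  rintro F (⟨hF3, hF2⟩ | rfl) hF
  · exact hF2 ((mem_TFam_iff_forall_entry_lt hℓ hF3).2 (hF.entry_lt chainMatrix_rMat))
  · exact chainMatrix_not_isConfig_I₂ hF

theorem card_le_of_rMat_two (hA : RMat 2 A) (hS : SimpleM A)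
    (hI₂ : ¬IsConfig !![1, 0; 0, 1] A) : n ≤ m + 1 := by
  have hsub : ∀ j k, (∀ x, A x j = 1 → A x k ≠ 0) → ones A j ⊆ ones A k := fun j k h x hx => by
    rw [mem_ones] at hx ⊢
    have := h x hx
    have := hA x k
    omega
  have hinj : ∀ j k, ones A j ⊆ ones A k → #(ones A j) = #(ones A k) → j = k := fun j k h hc =>
    hS j k fun x => by
      have := Finset.ext_iff.1 (eq_of_subset_of_card_le h hc.ge) x
      rw [mem_ones, mem_ones] at this
      have := hA x j
      have := hA x k
      omega
  calc n = #(univ : Finset (Fin n)) := by simp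
    _ ≤ #(range (m + 1)) := by
      refine card_le_card_of_injOn (fun j => #(ones A j)) (fun j _ => ?_) fun j _ k _ h => ?_
      · simpa [Nat.lt_succ_iff] using card_le_univ (ones A j)
      · by_contra hjk
        rcases ones_dichotomy hI₂ hjk with h' | h'
        exacts [hjk (hinj j k (hsub j k h') h), hjk (hinj k j (hsub k j h') h.symm).symm]
    _ = m + 1 := card_range _

theorem forb_I₂ (m : ℕ) : forb m 2 {⟨2, 2, !![1, 0; 0, 1]⟩} = m + 1 := by
  have hB : ∀ n (A : MatN m n), RMat 2 A → SimpleM A →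
      AvoidsFam A {⟨2, 2, !![1, 0; 0, 1]⟩} → n ≤ m + 1 :=
    fun _ A hA hS hF => card_le_of_rMat_two hA hS (avoidsFam_I₂_iff.1 hF)
  exact le_antisymm (forb_le_s4 hB) (le_forb hB _ chainMatrix_rMat chainMatrix_simple
    (avoidsFam_I₂_iff.2 chainMatrix_not_isConfig_I₂))

theorem forbmax_I₂ (m : ℕ) : forbmax m 2 {⟨2, 2, !![1, 0; 0, 1]⟩} = m + 1 := by
  refine le_antisymm (csSup_le' ?_) (le_csSup ⟨m + 1, ?_⟩ ⟨m, le_rfl, (forb_I₂ m).symm⟩) <;>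
    rintro _ ⟨m', hm', rfl⟩ <;> rw [forb_I₂] <;> omega

end IdentityFree

/-- For `ℓ ≥ 2` and `I₂ = F_{0,1,1,0}` the `2×2` identity,
`forb(m, 3, (𝒯_ℓ(3) \ 𝒯_ℓ(2)) ∪ {I₂})` is `Θ(forbmax(m, I₂))`; in particular it
is `Θ(m)`. -/
theorem stmt4 (ℓ : ℕ) (hℓ : 2 ≤ ℓ) :
    (∃ c₁ c₂ : ℝ, 0 < c₁ ∧ 0 < c₂ ∧ ∀ m : ℕ, 1 ≤ m →
      c₁ * (forbmax m 2 {⟨2, 2, !![1, 0; 0, 1]⟩} : ℝ) ≤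
        (forb m 3 ((TFam ℓ 3 \ TFam ℓ 2) ∪ {⟨2, 2, !![1, 0; 0, 1]⟩}) : ℝ) ∧
      (forb m 3 ((TFam ℓ 3 \ TFam ℓ 2) ∪ {⟨2, 2, !![1, 0; 0, 1]⟩}) : ℝ) ≤
        c₂ * (forbmax m 2 {⟨2, 2, !![1, 0; 0, 1]⟩} : ℝ)) ∧
    (∃ c₁ c₂ : ℝ, 0 < c₁ ∧ 0 < c₂ ∧ ∀ m : ℕ, 1 ≤ m →
      c₁ * (m : ℝ) ≤
        (forb m 3 ((TFam ℓ 3 \ TFam ℓ 2) ∪ {⟨2, 2, !![1, 0; 0, 1]⟩}) : ℝ) ∧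
      (forb m 3 ((TFam ℓ 3 \ TFam ℓ 2) ∪ {⟨2, 2, !![1, 0; 0, 1]⟩}) : ℝ) ≤
        c₂ * (m : ℝ)) := by
  obtain ⟨K, hK⟩ := exists_card_le_of_avoidsFam hℓ
  have hlow : ∀ m, m + 1 ≤ forb m 3 ((TFam ℓ 3 \ TFam ℓ 2) ∪ {⟨2, 2, !![1, 0; 0, 1]⟩}) :=
    fun m => le_forb (hK m) (chainMatrix m) (fun i j => (chainMatrix_rMat i j).trans (by norm_num))
      chainMatrix_simple (chainMatrix_avoidsFam hℓ)
  have hup := fun m => forb_le_s4 (hK m)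
  have hKpos : 0 < K := by have := (hlow 0).trans (hup 0); omega
  refine ⟨⟨1, K, one_pos, by exact_mod_cast hKpos, fun m _ => ?_⟩,
    ⟨1, 2 * K, one_pos, by positivity, fun m hm => ⟨?_, ?_⟩⟩⟩
  · rw [forbmax_I₂, one_mul]
    exact ⟨by exact_mod_cast hlow m, by exact_mod_cast hup m⟩
  · rw [one_mul]
    exact_mod_cast (Nat.le_succ m).trans (hlow m)
  · have : K * (m + 1) ≤ 2 * K * m := by nlinarith
    exact_mod_cast (hup m).trans this
end
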